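/- Every smooth curve c : ℝ → ℝ³ with det(c',c'',c''') ≡ 1 whose special affine curvatures both vanish identically (det(c'',c''',c'''') = 0 and det(c',c''',c'''') = 0) is of the form c(σ) = K + B·(σ, σ²/2, σ³/6) for some constant K ∈ ℝ³ and some B ∈ SL(3,ℝ), i.e., it is a special affine image of the twisted cubic. -/

import Mathlib

open Matrix

/-- Determinant of the 3×3 matrix with columns `v₁ v₂ v₃`. -/
noncomputable def det3 (v₁ v₂ v₃ : Fin 3 → ℝ) : ℝ :=
  ((Matrix.of ![v₁, v₂, v₃]).transpose).det

/-- The frame matrix with columns `c' c'' c'''`. -/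
noncomputable def frame (c : ℝ → Fin 3 → ℝ) (t : ℝ) : Matrix (Fin 3) (Fin 3) ℝ :=
  (Matrix.of ![deriv c t, deriv (deriv c) t, deriv (deriv (deriv c)) t]).transpose

/-- The curve `α_c = (c',c'',c''') / det(c',c'',c''')^(1/3)`. -/
noncomputable def alphaC (c : ℝ → Fin 3 → ℝ) (t : ℝ) : Matrix (Fin 3) (Fin 3) ℝ :=
  ((det3 (deriv c t) (deriv (deriv c) t) (deriv (deriv (deriv c)) t)) ^ ((1:ℝ)/3))⁻¹ • frame c t

/-- The first special affine curvature `χ₁ = det(c'',c''',c'''')`. -/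
noncomputable def chi1 (c : ℝ → Fin 3 → ℝ) (t : ℝ) : ℝ :=
  det3 (deriv (deriv c) t) (deriv (deriv (deriv c)) t) (deriv (deriv (deriv (deriv c))) t)

/-- The second special affine curvature `χ₂ = det(c',c''',c'''')`. -/
noncomputable def chi2 (c : ℝ → Fin 3 → ℝ) (t : ℝ) : ℝ :=
  det3 (deriv c t) (deriv (deriv (deriv c)) t) (deriv (deriv (deriv (deriv c))) t)

lemma det3_eq (v₁ v₂ v₃ : Fin 3 → ℝ) :
    det3 v₁ v₂ v₃ = v₁ 0 * v₂ 1 * v₃ 2 - v₁ 0 * v₃ 1 * v₂ 2 - v₂ 0 * v₁ 1 * v₃ 2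
      + v₂ 0 * v₃ 1 * v₁ 2 + v₃ 0 * v₁ 1 * v₂ 2 - v₃ 0 * v₂ 1 * v₁ 2 := by
  rw [det3, Matrix.det_transpose]; simp [Matrix.det_fin_three]; ring

lemma cramer3 (v₁ v₂ v₃ w : Fin 3 → ℝ) (i : Fin 3) :
    det3 v₁ v₂ v₃ * w i =
      det3 w v₂ v₃ * v₁ i + det3 v₁ w v₃ * v₂ i + det3 v₁ v₂ w * v₃ i := by
  fin_cases i <;> simp [det3_eq] <;> ring

lemma hasDerivAt_det3 {F G H : ℝ → Fin 3 → ℝ} {f g h : Fin 3 → ℝ} {t : ℝ}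
    (hF : HasDerivAt F f t) (hG : HasDerivAt G g t) (hH : HasDerivAt H h t) :
    HasDerivAt (fun s => det3 (F s) (G s) (H s))
      (det3 f (G t) (H t) + det3 (F t) g (H t) + det3 (F t) (G t) h) t := by
  have hF' := hasDerivAt_pi.1 hF
  have hG' := hasDerivAt_pi.1 hG
  have hH' := hasDerivAt_pi.1 hH
  have key : HasDerivAt (fun s => (F s 0 * G s 1 * H s 2 - F s 0 * H s 1 * G s 2
      - G s 0 * F s 1 * H s 2 + G s 0 * H s 1 * F s 2 + H s 0 * F s 1 * G s 2
      - H s 0 * G s 1 * F s 2))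
      (det3 f (G t) (H t) + det3 (F t) g (H t) + det3 (F t) (G t) h) t := by
    have h1 := ((((((hF' 0).mul (hG' 1)).mul (hH' 2)).sub
        (((hF' 0).mul (hH' 1)).mul (hG' 2))).sub
        (((hG' 0).mul (hF' 1)).mul (hH' 2))).add
        (((hG' 0).mul (hH' 1)).mul (hF' 2))).add
        (((hH' 0).mul (hF' 1)).mul (hG' 2))
    have h2 := h1.sub (((hH' 0).mul (hG' 1)).mul (hF' 2))
    refine h2.congr_deriv ?_
    simp only [det3_eq, Pi.mul_apply]; ring
  have : (fun s => det3 (F s) (G s) (H s)) = (fun s => (F s 0 * G s 1 * H s 2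
      - F s 0 * H s 1 * G s 2 - G s 0 * F s 1 * H s 2 + G s 0 * H s 1 * F s 2
      + H s 0 * F s 1 * G s 2 - H s 0 * G s 1 * F s 2)) := by
    funext s; rw [det3_eq]
  rw [this]; exact key

theorem stmt_13 (c : ℝ → Fin 3 → ℝ) (hc : ContDiff ℝ (⊤ : ℕ∞) c)
    (hdet : ∀ σ, det3 (deriv c σ) (deriv (deriv c) σ) (deriv (deriv (deriv c)) σ) = 1)
    (hχ1 : ∀ σ, chi1 c σ = 0) (hχ2 : ∀ σ, chi2 c σ = 0) :
    ∃ (K : Fin 3 → ℝ) (B : Matrix.SpecialLinearGroup (Fin 3) ℝ),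
      ∀ σ, c σ = K + (B : Matrix (Fin 3) (Fin 3) ℝ).mulVec ![σ, σ ^ 2 / 2, σ ^ 3 / 6] := by
  set c1 := deriv c with hc1def
  set c2 := deriv c1 with hc2def
  set c3 := deriv c2 with hc3def
  set c4 := deriv c3 with hc4def
  have hc' : ContDiff ℝ (⊤:ℕ∞) c := hc.of_le (by simp)
  have hdc : Differentiable ℝ c := hc'.differentiable (by simp)
  have hc1 : ContDiff ℝ (⊤:ℕ∞) c1 := (contDiff_infty_iff_deriv.mp hc').2
  have hc2 : ContDiff ℝ (⊤:ℕ∞) c2 := (contDiff_infty_iff_deriv.mp hc1).2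
  have hc3 : ContDiff ℝ (⊤:ℕ∞) c3 := (contDiff_infty_iff_deriv.mp hc2).2
  have hd1 : Differentiable ℝ c1 := hc1.differentiable (by simp)
  have hd2 : Differentiable ℝ c2 := hc2.differentiable (by simp)
  have hd3 : Differentiable ℝ c3 := hc3.differentiable (by simp)
  -- the third frame-determinant derivative term vanishes
  have hC : ∀ t, det3 (c1 t) (c2 t) (c4 t) = 0 := by
    intro t
    have H := hasDerivAt_det3 ((hd1 t).hasDerivAt) ((hd2 t).hasDerivAt) ((hd3 t).hasDerivAt)
    have Hconst : HasDerivAt (fun s => det3 (c1 s) (c2 s) (c3 s)) 0 t := by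
      have : (fun s => det3 (c1 s) (c2 s) (c3 s)) = fun _ => (1:ℝ) := funext hdet
      rw [this]; exact hasDerivAt_const t 1
    have heq := H.unique Hconst
    have e1 : det3 (deriv c1 t) (c2 t) (c3 t) = 0 := by
      rw [show deriv c1 t = c2 t from rfl]
      simp [det3_eq]
    have e2 : det3 (c1 t) (deriv c2 t) (c3 t) = 0 := by
      rw [show deriv c2 t = c3 t from rfl]
      simp [det3_eq]
    rw [e1, e2] at heq
    linarith [heq]
  -- fourth derivative vanishes
  have hc4 : ∀ t, c4 t = 0 := by
    intro t
    funext i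
    have key := cramer3 (c1 t) (c2 t) (c3 t) (c4 t) i
    rw [hdet t] at key
    have k1 : det3 (c4 t) (c2 t) (c3 t) = chi1 c t := by
      rw [chi1]; simp only [det3_eq, ← hc1def, ← hc2def, ← hc3def, ← hc4def]; ring
    have k2 : det3 (c1 t) (c4 t) (c3 t) = - chi2 c t := by
      rw [chi2]; simp only [det3_eq, ← hc1def, ← hc2def, ← hc3def, ← hc4def]; ring
    rw [k1, k2, hχ1 t, hχ2 t, hC t] at key
    simpa using key
  -- integrate three times
  have key3 : ∀ t, c3 t = c3 0 := fun t =>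
    is_const_of_deriv_eq_zero hd3 (fun t => hc4 t) t 0
  have h2 : ∀ t, c2 t = (c2 0) + t • (c3 0) := by
    intro t
    have hdiff : Differentiable ℝ (fun s => c2 s - s • (c3 0)) :=
      hd2.sub ((differentiable_id.smul_const (c3 0)))
    have hdz : ∀ s, deriv (fun s => c2 s - s • (c3 0)) s = 0 := by
      intro s
      have := ((hd2 s).hasDerivAt.sub ((hasDerivAt_id s).smul_const (c3 0))).deriv
      simp only [id_eq, one_smul] at this
      refine this.trans ?_
      rw [show deriv c2 s = c3 s from rfl, key3 s]
      simp
    have := is_const_of_deriv_eq_zero hdiff hdz t 0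
    simp only [zero_smul, sub_zero] at this
    have : c2 t - t • (c3 0) = c2 0 := this
    rw [← this]; abel
  have h1 : ∀ t, c1 t = (c1 0) + t • (c2 0) + (t^2/2) • (c3 0) := by
    intro t
    have hp2 : ∀ s : ℝ, HasDerivAt (fun u : ℝ => u^2/2) s s := by
      intro s
      have := (hasDerivAt_pow 2 s).div_const 2
      refine this.congr_deriv ?_; push_cast; ring
    have hdiff : Differentiable ℝ (fun s => c1 s - (s • (c2 0) + (s^2/2) • (c3 0))) := by
      apply hd1.sub
      exact (differentiable_id.smul_const (c2 0)).add
        ((differentiable_id.pow 2 |>.div_const 2).smul_const (c3 0))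
    have hdz : ∀ s, deriv (fun s => c1 s - (s • (c2 0) + (s^2/2) • (c3 0))) s = 0 := by
      intro s
      have := ((hd1 s).hasDerivAt.sub
        (((hasDerivAt_id s).smul_const (c2 0)).add ((hp2 s).smul_const (c3 0)))).deriv
      simp only [id_eq, one_smul] at this
      refine this.trans ?_
      rw [show deriv c1 s = c2 s from rfl, h2 s]
      abel
    have := is_const_of_deriv_eq_zero hdiff hdz t 0
    simp only [zero_smul, ne_eq, OfNat.ofNat_ne_zero, not_false_eq_true, zero_pow,
      zero_div, add_zero, sub_zero] at this
    have h0 : c1 t - (t • (c2 0) + (t^2/2) • (c3 0)) = c1 0 := by simpa using this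
    rw [← h0]; abel
  have h0 : ∀ t, c t = c 0 + t • (c1 0) + (t^2/2) • (c2 0) + (t^3/6) • (c3 0) := by
    intro t
    have hp2 : ∀ s : ℝ, HasDerivAt (fun u : ℝ => u^2/2) s s := by
      intro s
      have := (hasDerivAt_pow 2 s).div_const 2
      refine this.congr_deriv ?_; push_cast; ring
    have hp3 : ∀ s : ℝ, HasDerivAt (fun u : ℝ => u^3/6) (s^2/2) s := by
      intro s
      have := (hasDerivAt_pow 3 s).div_const 6
      refine this.congr_deriv ?_; push_cast; ring
    have hdiff : Differentiable ℝ
        (fun s => c s - (s • (c1 0) + (s^2/2) • (c2 0) + (s^3/6) • (c3 0))) := by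
      apply hdc.sub
      exact ((differentiable_id.smul_const (c1 0)).add
        ((differentiable_id.pow 2 |>.div_const 2).smul_const (c2 0))).add
        ((differentiable_id.pow 3 |>.div_const 6).smul_const (c3 0))
    have hdz : ∀ s, deriv (fun s => c s - (s • (c1 0) + (s^2/2) • (c2 0) + (s^3/6) • (c3 0))) s = 0 := by
      intro s
      have := ((hdc s).hasDerivAt.sub
        ((((hasDerivAt_id s).smul_const (c1 0)).add ((hp2 s).smul_const (c2 0))).add
          ((hp3 s).smul_const (c3 0)))).deriv
      simp only [id_eq, one_smul] at this
      refine this.trans ?_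
      rw [show deriv c s = c1 s from rfl, h1 s]
      abel
    have := is_const_of_deriv_eq_zero hdiff hdz t 0
    simp only [zero_smul, ne_eq, OfNat.ofNat_ne_zero, not_false_eq_true, zero_pow,
      zero_div, add_zero, sub_zero] at this
    have h0' : c t - (t • (c1 0) + (t^2/2) • (c2 0) + (t^3/6) • (c3 0)) = c 0 := by simpa using this
    rw [← h0']; abel
  -- assemble the answer
  refine ⟨c 0, ⟨(Matrix.of ![(c1 0), (c2 0), (c3 0)]).transpose, ?_⟩, ?_⟩
  · have := hdet 0
    rw [det3] at this
    exact this
  · intro σ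
    funext i
    rw [h0 σ]
    simp only [Pi.add_apply, Pi.smul_apply, smul_eq_mul]
    rw [Matrix.mulVec]
    simp [dotProduct, Fin.sum_univ_three, Matrix.transpose_apply]
    ring
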